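/- Overlap formula in two-step PBT: for a partition ν ⊢_d N−2 and addable cells a of ν, with f_μ := m_μ²/Σ_{μ'⊢_d N} m_{μ'}² (optimal pPBT coefficients), the overlap ⟨v | w_a⟩ between the vectors v := Σ_{a≠b∈AC_d(ν)} √(c_{ν∪a∪b}) √(m_{ν∪a∪b}/m_ν) |a,b⟩ and w_a := Σ_{b∈AC_d(ν∪a)} √(d_{ν∪a∪b}/(N d_{ν∪a})) |a,b⟩ (in the orthonormal basis {|a,b⟩} indexed by two-cell additions) equals d · m_{ν∪a} · √(d^N g(N)/(N d_{ν∪a} m_ν)), where c_μ = d^N g(N) m_μ/d_μ and g(N) = 1/Σ_{μ⊢_d N} m_μ². -/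

import Mathlib

open Finset BigOperators

namespace PBT

/-- Partitions of `N` with at most `d` (nonzero) parts, encoded as antitone
functions `Fin d → ℕ` summing to `N`. -/
def Ptn (d N : ℕ) : Finset (Fin d → ℕ) :=
  (Fintype.piFinset fun _ => Finset.range (N + 1)).filter
    (fun lam => (∀ i j : Fin d, i ≤ j → lam j ≤ lam i) ∧ ∑ i, lam i = N)

/-- Weyl dimension formula for the `U(d)` irrep of highest weight `lam`. -/
def weylDim (d : ℕ) (lam : Fin d → ℕ) : ℚ :=
  ∏ p ∈ Finset.univ.filter (fun p : Fin d × Fin d => p.1 < p.2),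
    (((lam p.1 : ℚ) - (lam p.2 : ℚ)) + (p.2.1 : ℚ) - (p.1.1 : ℚ)) / ((p.2.1 : ℚ) - (p.1.1 : ℚ))

/-- Add a cell in row `i`. -/
def addCell {d : ℕ} (lam : Fin d → ℕ) (i : Fin d) : Fin d → ℕ :=
  Function.update lam i (lam i + 1)

/-- Remove a cell in row `i`. -/
def removeCell {d : ℕ} (lam : Fin d → ℕ) (i : Fin d) : Fin d → ℕ :=
  Function.update lam i (lam i - 1)

/-- Rows where a cell can be added keeping a valid partition with at most `d` rows. -/
def AC (d : ℕ) (lam : Fin d → ℕ) : Finset (Fin d) :=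
  Finset.univ.filter (fun i => ∀ j : Fin d, j < i → lam i < lam j)

/-- Rows where a cell can be removed keeping a valid partition. -/
def RC (d : ℕ) (lam : Fin d → ℕ) : Finset (Fin d) :=
  Finset.univ.filter (fun i => 0 < lam i ∧ ∀ j : Fin d, i < j → lam j < lam i)

/-- Content of the addable cell in row `i`: `(lam i + 1) - (i + 1) = lam i - i`. -/
def contA {d : ℕ} (lam : Fin d → ℕ) (i : Fin d) : ℤ := (lam i : ℤ) - (i : ℤ)

/-- Fuel-based count of standard Young tableaux via the branching rule. -/
def sytAux (d : ℕ) : ℕ → (Fin d → ℕ) → ℕ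
  | 0, _ => 1
  | n + 1, lam => ∑ i ∈ RC d lam, sytAux d n (removeCell lam i)

/-- The number of standard Young tableaux of shape `lam` (dimension of the
symmetric-group irrep labelled by `lam`). -/
def syt {d : ℕ} (lam : Fin d → ℕ) : ℕ := sytAux d (∑ i, lam i) lam

end PBT



open Polynomial

section Aux
open Finset

lemma lagrange_sum {ι : Type*} [DecidableEq ι] (s : Finset ι) (v : ι → ℚ)
    (hv : Set.InjOn v s) :
    ∑ b ∈ s, ∏ j ∈ s.erase b, (v b + 1 - v j) / (v b - v j) = (s.card : ℚ) := by
  rcases s.eq_empty_or_nonempty with rfl | hs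
  · simp
  have hn : 0 < s.card := Finset.card_pos.mpr hs
  set A : ι → ℚ := fun b => ∏ j ∈ s.erase b, (v b + 1 - v j) / (v b - v j) with hA
  have hne : ∀ b ∈ s, ∀ j ∈ s.erase b, v b - v j ≠ 0 := by
    intro b hb j hj
    have hj' := Finset.mem_erase.mp hj
    exact sub_ne_zero.mpr fun h => hj'.1 (hv hj'.2 hb h.symm)
  have hAeval : ∀ b ∈ s, A b * ∏ j ∈ s.erase b, (v b - v j)
      = ∏ j ∈ s.erase b, (v b + 1 - v j) := by
    intro b hb
    rw [hA, ← Finset.prod_mul_distrib]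
    exact Finset.prod_congr rfl fun j hj => div_mul_cancel₀ _ (hne b hb j hj)
  set P : ℚ[X] := ∏ j ∈ s, (X - C (v j - 1)) with hP
  set Q : ℚ[X] := ∏ j ∈ s, (X - C (v j)) with hQ
  set R : ℚ[X] := ∑ b ∈ s, C (A b) * ∏ j ∈ s.erase b, (X - C (v j)) with hR
  have hPm : P.Monic := monic_prod_of_monic _ _ fun j _ => monic_X_sub_C _
  have hQm : Q.Monic := monic_prod_of_monic _ _ fun j _ => monic_X_sub_C _
  have hPdeg : P.natDegree = s.card := by
    rw [hP, natDegree_prod _ _ fun j _ => X_sub_C_ne_zero _]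
    simp only [natDegree_X_sub_C, Finset.sum_const, smul_eq_mul, mul_one]
  have hQdeg : Q.natDegree = s.card := by
    rw [hQ, natDegree_prod _ _ fun j _ => X_sub_C_ne_zero _]
    simp only [natDegree_X_sub_C, Finset.sum_const, smul_eq_mul, mul_one]
  have hdegPQ : (P - Q).degree < (s.card : WithBot ℕ) := by
    have hdq : P.degree = Q.degree := by
      rw [Polynomial.degree_eq_natDegree hPm.ne_zero,
        Polynomial.degree_eq_natDegree hQm.ne_zero, hPdeg, hQdeg]
    have h := Polynomial.degree_sub_lt hdq hPm.ne_zero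
      (hPm.leadingCoeff.trans hQm.leadingCoeff.symm)
    rwa [Polynomial.degree_eq_natDegree hPm.ne_zero, hPdeg] at h
  have hdegR : R.degree < (s.card : WithBot ℕ) := by
    refine lt_of_le_of_lt (Polynomial.degree_sum_le _ _) ?_
    rw [Finset.sup_lt_iff (by exact_mod_cast WithBot.bot_lt_coe (s.card : ℕ))]
    intro b hb
    refine lt_of_le_of_lt (Polynomial.degree_mul_le _ _) ?_
    have h2 : (∏ j ∈ s.erase b, (X - C (v j))).degree = ((s.card - 1 : ℕ) : WithBot ℕ) := by
      rw [Polynomial.degree_prod]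
      simp [Polynomial.degree_X_sub_C, Finset.card_erase_of_mem hb]
    calc degree (C (A b)) + (∏ j ∈ s.erase b, (X - C (v j))).degree
        ≤ 0 + ((s.card - 1 : ℕ) : WithBot ℕ) := add_le_add degree_C_le (le_of_eq h2)
      _ = ((s.card - 1 : ℕ) : WithBot ℕ) := zero_add _
      _ < (s.card : WithBot ℕ) := by exact_mod_cast Nat.sub_lt hn one_pos
  have heval : ∀ i ∈ s, (P - Q).eval (v i) = R.eval (v i) := by
    intro i hi
    have hPe : P.eval (v i) = ∏ j ∈ s.erase i, (v i + 1 - v j) := by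
      rw [hP, eval_prod, ← Finset.mul_prod_erase s _ hi]
      simp only [eval_sub, eval_X, eval_C, sub_sub_cancel]
      rw [one_mul]
      exact Finset.prod_congr rfl fun j hj => by ring
    have hQe : Q.eval (v i) = 0 := by
      rw [hQ, eval_prod]
      exact Finset.prod_eq_zero hi (by simp)
    have hRe : R.eval (v i) = ∏ j ∈ s.erase i, (v i + 1 - v j) := by
      rw [hR, eval_finset_sum, Finset.sum_eq_single i]
      · rw [eval_mul, eval_C, eval_prod]
        simp only [eval_sub, eval_X, eval_C]
        exact hAeval i hi
      · intro b hb hbi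
        rw [eval_mul, eval_prod]
        refine mul_eq_zero_of_right _ (Finset.prod_eq_zero
          (Finset.mem_erase.mpr ⟨hbi.symm, hi⟩) ?_)
        simp
      · intro h; exact absurd hi h
    rw [eval_sub, hPe, hQe, hRe, sub_zero]
  have heq : P - Q = R :=
    Polynomial.eq_of_degrees_lt_of_eval_index_eq s hv
      (by simpa using hdegPQ) (by simpa using hdegR) heval
  have hc := congrArg (fun p : ℚ[X] => Polynomial.coeff p (s.card - 1)) heq
  simp only [Polynomial.coeff_sub] at hc
  rw [hP, hQ, hR] at hc
  rw [Polynomial.prod_X_sub_C_coeff_card_pred s (fun j => v j - 1) hn,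
    Polynomial.prod_X_sub_C_coeff_card_pred s v hn, Polynomial.finset_sum_coeff] at hc
  have hcR : ∑ b ∈ s, (C (A b) * ∏ j ∈ s.erase b, (X - C (v j))).coeff (s.card - 1)
      = ∑ b ∈ s, A b := by
    refine Finset.sum_congr rfl fun b hb => ?_
    rw [Polynomial.coeff_C_mul]
    have hm : (∏ j ∈ s.erase b, (X - C (v j))).Monic :=
      monic_prod_of_monic _ _ fun _ _ => monic_X_sub_C _
    have hdeg : (∏ j ∈ s.erase b, (X - C (v j))).natDegree = s.card - 1 := by
      rw [natDegree_prod _ _ fun j _ => X_sub_C_ne_zero _]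
      simp [natDegree_X_sub_C, Finset.card_erase_of_mem hb]
    rw [← hdeg, hm.coeff_natDegree, mul_one]
  rw [hcR] at hc
  rw [← hc, Finset.sum_sub_distrib]
  simp

def pairs (d : ℕ) : Finset (Fin d × Fin d) := Finset.univ.filter (fun p => p.1 < p.2)

def vand {d : ℕ} (w : Fin d → ℚ) : ℚ := ∏ p ∈ pairs d, (w p.1 - w p.2)

def vf {d : ℕ} (lam : Fin d → ℕ) : Fin d → ℚ := fun i => (lam i : ℚ) - (i : ℚ)

lemma prod_pairs_b {d : ℕ} (b : Fin d) (F : Fin d × Fin d → ℚ) :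
    ∏ p ∈ (pairs d).filter (fun p => p.1 = b ∨ p.2 = b), F p
      = ∏ j ∈ Finset.univ.erase b, F (if j < b then (j, b) else (b, j)) := by
  refine Finset.prod_nbij' (fun p => if p.1 = b then p.2 else p.1)
      (fun j => if j < b then (j, b) else (b, j)) ?_ ?_ ?_ ?_ ?_
  · intro p hp
    simp only [pairs, Finset.mem_filter, Finset.mem_univ, true_and] at hp
    obtain ⟨hlt, hb⟩ := hp
    beta_reduce
    rcases hb with hb | hb
    · rw [if_pos hb]
      exact Finset.mem_erase.mpr ⟨fun h => absurd (hb ▸ h ▸ hlt) (lt_irrefl _), Finset.mem_univ _⟩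
    · have h1 : p.1 ≠ b := fun h => absurd (hb ▸ h ▸ hlt) (lt_irrefl _)
      rw [if_neg h1]
      exact Finset.mem_erase.mpr ⟨h1, Finset.mem_univ _⟩
  · intro j hj
    have hjb := (Finset.mem_erase.mp hj).1
    beta_reduce
    by_cases h : j < b
    · rw [if_pos h]
      simp only [pairs, Finset.mem_filter, Finset.mem_univ, true_and]
      exact ⟨h, Or.inr trivial⟩
    · rw [if_neg h]
      have : b < j := lt_of_le_of_ne (not_lt.mp h) (Ne.symm hjb)
      simp only [pairs, Finset.mem_filter, Finset.mem_univ, true_and]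
      exact ⟨this, Or.inl trivial⟩
  · intro p hp
    simp only [pairs, Finset.mem_filter, Finset.mem_univ, true_and] at hp
    obtain ⟨hlt, hb⟩ := hp
    beta_reduce
    rcases hb with hb | hb
    · rw [if_pos hb, if_neg (not_lt.mpr (le_of_lt (hb ▸ hlt)))]
      exact Prod.ext hb.symm rfl
    · have h1 : p.1 ≠ b := fun h => absurd (h ▸ hb ▸ hlt) (lt_irrefl _)
      rw [if_neg h1, if_pos (hb ▸ hlt)]
      exact Prod.ext rfl hb.symm
  · intro j hj
    have hjb := (Finset.mem_erase.mp hj).1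
    beta_reduce
    by_cases h : j < b
    · rw [if_pos h]
      simp [hjb]
    · rw [if_neg h]
      simp
  · intro p hp
    simp only [pairs, Finset.mem_filter, Finset.mem_univ, true_and] at hp
    obtain ⟨hlt, hb⟩ := hp
    beta_reduce
    rcases hb with hb | hb
    · rw [if_pos hb, if_neg (not_lt.mpr (le_of_lt (hb ▸ hlt)))]
      rw [show ((b, p.2) : Fin d × Fin d) = p from Prod.ext hb.symm rfl]
    · have h1 : p.1 ≠ b := fun h => absurd (h ▸ hb ▸ hlt) (lt_irrefl _)
      rw [if_neg h1, if_pos (hb ▸ hlt)]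
      rw [show ((p.1, b) : Fin d × Fin d) = p from Prod.ext rfl hb.symm]

lemma vand_update {d : ℕ} (w : Fin d → ℚ) (b : Fin d) :
    vand (Function.update w b (w b + 1)) * ∏ j ∈ Finset.univ.erase b, (w b - w j)
      = vand w * ∏ j ∈ Finset.univ.erase b, (w b + 1 - w j) := by
  classical
  set w' := Function.update w b (w b + 1) with hw'
  have hw'b : w' b = w b + 1 := Function.update_self _ _ _
  have hw'j : ∀ j : Fin d, j ≠ b → w' j = w j := fun j hj => Function.update_of_ne hj _ _
  have hsplit : ∀ u : Fin d → ℚ, vand u =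
      (∏ p ∈ (pairs d).filter (fun p => p.1 = b ∨ p.2 = b), (u p.1 - u p.2)) *
      ∏ p ∈ (pairs d).filter (fun p => ¬(p.1 = b ∨ p.2 = b)), (u p.1 - u p.2) :=
    fun u => (Finset.prod_filter_mul_prod_filter_not _ _ _).symm
  rw [hsplit w', hsplit w]
  have hnb : ∏ p ∈ (pairs d).filter (fun p => ¬(p.1 = b ∨ p.2 = b)), (w' p.1 - w' p.2)
      = ∏ p ∈ (pairs d).filter (fun p => ¬(p.1 = b ∨ p.2 = b)), (w p.1 - w p.2) := by
    refine Finset.prod_congr rfl fun p hp => ?_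
    have hp2 := (Finset.mem_filter.mp hp).2
    push_neg at hp2
    rw [hw'j _ hp2.1, hw'j _ hp2.2]
  rw [hnb, prod_pairs_b b (fun p => w' p.1 - w' p.2), prod_pairs_b b (fun p => w p.1 - w p.2)]
  have key : (∏ j ∈ Finset.univ.erase b,
        (fun p : Fin d × Fin d => w' p.1 - w' p.2) (if j < b then (j, b) else (b, j)))
        * ∏ j ∈ Finset.univ.erase b, (w b - w j)
      = (∏ j ∈ Finset.univ.erase b,
        (fun p : Fin d × Fin d => w p.1 - w p.2) (if j < b then (j, b) else (b, j)))
        * ∏ j ∈ Finset.univ.erase b, (w b + 1 - w j) := by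
    rw [← Finset.prod_mul_distrib, ← Finset.prod_mul_distrib]
    refine Finset.prod_congr rfl fun j hj => ?_
    have hjb := (Finset.mem_erase.mp hj).1
    beta_reduce
    by_cases h : j < b
    · rw [if_pos h]
      simp only [hw'b, hw'j _ hjb]
      ring
    · rw [if_neg h]
      simp only [hw'b, hw'j _ hjb]
      ring
  rw [mul_right_comm, key, mul_right_comm]

lemma weylDim_eq_vand (d : ℕ) (lam : Fin d → ℕ) :
    PBT.weylDim d lam = vand (vf lam) / ∏ p ∈ pairs d, ((p.2.1 : ℚ) - (p.1.1 : ℚ)) := by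
  rw [PBT.weylDim, vand, ← Finset.prod_div_distrib]
  refine Finset.prod_congr rfl fun p _ => ?_
  have hnum : ((lam p.1 : ℚ) - (lam p.2 : ℚ)) + (p.2.1 : ℚ) - (p.1.1 : ℚ)
      = vf lam p.1 - vf lam p.2 := by simp only [vf]; ring
  rw [hnum]

lemma vf_addCell {d : ℕ} (lam : Fin d → ℕ) (b : Fin d) :
    vf (PBT.addCell lam b) = Function.update (vf lam) b (vf lam b + 1) := by
  funext i
  by_cases h : i = b
  · subst h
    simp only [vf, PBT.addCell, Function.update_self]
    push_cast
    ring
  · simp only [vf, PBT.addCell, Function.update_of_ne h]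

lemma pairs_den_pos {d : ℕ} {p : Fin d × Fin d} (hp : p ∈ pairs d) :
    (0 : ℚ) < (p.2.1 : ℚ) - (p.1.1 : ℚ) := by
  have hlt : p.1 < p.2 := (Finset.mem_filter.mp hp).2
  have : (p.1.1 : ℚ) < (p.2.1 : ℚ) := by exact_mod_cast hlt
  linarith

lemma weylDim_pos {d : ℕ} (lam : Fin d → ℕ)
    (hm : ∀ i j : Fin d, i ≤ j → lam j ≤ lam i) : 0 < PBT.weylDim d lam := by
  rw [PBT.weylDim]
  apply Finset.prod_pos
  intro p hp
  have hlt : p.1 < p.2 := (Finset.mem_filter.mp hp).2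
  have h1 : (p.1.1 : ℚ) < (p.2.1 : ℚ) := by exact_mod_cast hlt
  have h2 : (lam p.2 : ℚ) ≤ (lam p.1 : ℚ) := by exact_mod_cast hm p.1 p.2 hlt.le
  apply div_pos <;> linarith

lemma pieri {d : ℕ} (lam : Fin d → ℕ)
    (hm : ∀ i j : Fin d, i ≤ j → lam j ≤ lam i) :
    ∑ b ∈ PBT.AC d lam, PBT.weylDim d (PBT.addCell lam b)
      = (d : ℚ) * PBT.weylDim d lam := by
  classical
  set v : Fin d → ℚ := vf lam with hv
  have hvanti : ∀ i j : Fin d, i < j → v j < v i := by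
    intro i j hij
    have h1 : (lam j : ℚ) ≤ (lam i : ℚ) := by exact_mod_cast hm i j hij.le
    have h2 : (i.1 : ℚ) < (j.1 : ℚ) := by exact_mod_cast hij
    simp only [hv, vf]
    linarith
  have hinj : Set.InjOn v (Finset.univ : Finset (Fin d)) := by
    intro i _ j _ hij
    rcases lt_trichotomy i j with h | h | h
    · exact absurd hij (ne_of_gt (hvanti i j h))
    · exact h
    · exact absurd hij (ne_of_lt (hvanti j i h))
  have hvne : ∀ b : Fin d, ∀ j ∈ Finset.univ.erase b, v b - v j ≠ 0 := by
    intro b j hj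
    have hjb := (Finset.mem_erase.mp hj).1
    rcases lt_trichotomy j b with h | h | h
    · exact sub_ne_zero.mpr (ne_of_lt (hvanti j b h))
    · exact absurd h hjb
    · exact sub_ne_zero.mpr (ne_of_gt (hvanti b j h))
  have hD : (∏ p ∈ pairs d, ((p.2.1 : ℚ) - (p.1.1 : ℚ))) ≠ 0 :=
    Finset.prod_ne_zero_iff.mpr fun p hp => ne_of_gt (pairs_den_pos hp)
  have hall : ∀ b : Fin d, PBT.weylDim d (PBT.addCell lam b)
      = PBT.weylDim d lam * ∏ j ∈ Finset.univ.erase b, (v b + 1 - v j) / (v b - v j) := by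
    intro b
    have hE : (∏ j ∈ Finset.univ.erase b, (v b - v j)) ≠ 0 :=
      Finset.prod_ne_zero_iff.mpr (hvne b)
    have hvu := vand_update v b
    rw [weylDim_eq_vand, weylDim_eq_vand, vf_addCell, ← hv, Finset.prod_div_distrib]
    rw [div_mul_div_comm, ← hvu]
    rw [mul_comm (∏ p ∈ pairs d, ((p.2.1 : ℚ) - (p.1.1 : ℚ)))
      (∏ j ∈ Finset.univ.erase b, (v b - v j))]
    rw [mul_comm (vand (Function.update v b (v b + 1))) (∏ j ∈ Finset.univ.erase b, (v b - v j)),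
      mul_div_mul_left _ _ hE]
  have hT0 : ∀ b : Fin d, b ∉ PBT.AC d lam →
      (∏ j ∈ Finset.univ.erase b, (v b + 1 - v j) / (v b - v j)) = 0 := by
    intro b hb
    simp only [PBT.AC, Finset.mem_filter, Finset.mem_univ, true_and, not_forall] at hb
    obtain ⟨j, hj, hle⟩ := hb
    push_neg at hle
    have hb1 : 1 ≤ b.1 := by
      have : j.1 < b.1 := hj
      omega
    have hb'lt : b.1 - 1 < d := by omega
    set b' : Fin d := ⟨b.1 - 1, hb'lt⟩ with hb'
    have hjb' : j ≤ b' := by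
      rw [Fin.le_def]
      have : j.1 < b.1 := hj
      simp only [hb']
      omega
    have hb'b : b' < b := by
      rw [Fin.lt_def]
      simp only [hb']
      omega
    have heq : lam b' = lam b :=
      le_antisymm (le_trans (hm j b' hjb') hle) (hm b' b hb'b.le)
    have hmem : b' ∈ Finset.univ.erase b :=
      Finset.mem_erase.mpr ⟨ne_of_lt hb'b, Finset.mem_univ _⟩
    refine Finset.prod_eq_zero hmem ?_
    have : v b + 1 - v b' = 0 := by
      simp only [hv, vf, heq]
      simp only [hb']
      have : ((b.1 - 1 : ℕ) : ℚ) = (b.1 : ℚ) - 1 := by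
        have := Nat.cast_sub hb1 (R := ℚ)
        simpa using this
      rw [this]
      ring
    rw [this, zero_div]
  have hsum := lagrange_sum Finset.univ v hinj
  rw [Finset.card_univ, Fintype.card_fin] at hsum
  calc ∑ b ∈ PBT.AC d lam, PBT.weylDim d (PBT.addCell lam b)
      = ∑ b ∈ PBT.AC d lam, PBT.weylDim d lam *
          ∏ j ∈ Finset.univ.erase b, (v b + 1 - v j) / (v b - v j) :=
        Finset.sum_congr rfl fun b _ => hall b
    _ = ∑ b : Fin d, PBT.weylDim d lam *
          ∏ j ∈ Finset.univ.erase b, (v b + 1 - v j) / (v b - v j) :=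
        Finset.sum_subset (Finset.subset_univ _)
          (fun b _ hb => by rw [hT0 b hb, mul_zero])
    _ = PBT.weylDim d lam * ∑ b : Fin d,
          ∏ j ∈ Finset.univ.erase b, (v b + 1 - v j) / (v b - v j) := by
        rw [Finset.mul_sum]
    _ = PBT.weylDim d lam * d := by rw [hsum]
    _ = (d : ℚ) * PBT.weylDim d lam := mul_comm _ _

end Aux

lemma sytAux_pos (d : ℕ) : ∀ n (lam : Fin d → ℕ),
    (∀ i j : Fin d, i ≤ j → lam j ≤ lam i) → (∑ i, lam i = n) → 0 < PBT.sytAux d n lam := by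
  intro n
  induction n with
  | zero => intro lam _ _; simp [PBT.sytAux]
  | succ n ih =>
    intro lam hm hsum
    rw [PBT.sytAux]
    have hex : ∃ i, 0 < lam i := by
      by_contra h
      push_neg at h
      have : ∑ i, lam i = 0 := Finset.sum_eq_zero fun i _ => Nat.le_zero.mp (h i)
      omega
    set S := Finset.univ.filter (fun i => 0 < lam i) with hS
    have hSne : S.Nonempty := ⟨hex.choose, by simp [hS, hex.choose_spec]⟩
    set i0 := S.max' hSne with hi0
    have hi0pos : 0 < lam i0 := (Finset.mem_filter.mp (S.max'_mem hSne)).2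
    have hafter : ∀ j, i0 < j → lam j = 0 := by
      intro j hj
      by_contra h
      have hjS : j ∈ S := Finset.mem_filter.mpr ⟨Finset.mem_univ _, Nat.pos_of_ne_zero h⟩
      exact absurd (S.le_max' j hjS) (not_le.mpr hj)
    have hmem : i0 ∈ PBT.RC d lam :=
      Finset.mem_filter.mpr ⟨Finset.mem_univ _, hi0pos, fun j hj => (hafter j hj) ▸ hi0pos⟩
    have hm' : ∀ i j : Fin d, i ≤ j → PBT.removeCell lam i0 j ≤ PBT.removeCell lam i0 i := by
      intro i j hij
      unfold PBT.removeCell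
      by_cases hji : j = i0 <;> by_cases hii : i = i0
      · subst hji; subst hii; exact le_refl _
      · subst hji
        rw [Function.update_self, Function.update_of_ne hii]
        have := hm i i0 hij
        omega
      · subst hii
        rw [Function.update_self, Function.update_of_ne hji]
        have hlt : i0 < j := lt_of_le_of_ne hij (Ne.symm hji)
        rw [hafter j hlt]
        omega
      · rw [Function.update_of_ne hji, Function.update_of_ne hii]
        exact hm i j hij
    have hsum' : ∑ i, PBT.removeCell lam i0 i = n := by
      unfold PBT.removeCell
      rw [Finset.sum_update_of_mem (Finset.mem_univ i0)]
      have h1 : ∑ x ∈ Finset.univ.erase i0, lam x + lam i0 = n + 1 := by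
        rw [Finset.sum_erase_add _ _ (Finset.mem_univ i0)]
        exact hsum
      rw [Finset.sdiff_singleton_eq_erase]
      omega
    exact Finset.sum_pos' (fun i _ => Nat.zero_le _) ⟨i0, hmem, ih _ hm' hsum'⟩

lemma syt_pos {d : ℕ} (lam : Fin d → ℕ)
    (hm : ∀ i j : Fin d, i ≤ j → lam j ≤ lam i) : 0 < PBT.syt lam :=
  sytAux_pos d _ lam hm rfl

lemma addCell_anti {d : ℕ} {lam : Fin d → ℕ}
    (hm : ∀ i j : Fin d, i ≤ j → lam j ≤ lam i) {a : Fin d} (ha : a ∈ PBT.AC d lam) :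
    ∀ i j : Fin d, i ≤ j → PBT.addCell lam a j ≤ PBT.addCell lam a i := by
  have haP : ∀ j : Fin d, j < a → lam a < lam j := by
    have := (Finset.mem_filter.mp ha).2
    exact this
  intro i j hij
  unfold PBT.addCell
  by_cases hji : j = a <;> by_cases hii : i = a
  · rw [hji, hii]
  · rw [hji, Function.update_self, Function.update_of_ne hii]
    exact haP i (lt_of_le_of_ne (hji ▸ hij) hii)
  · rw [hii, Function.update_self, Function.update_of_ne hji]
    have := hm a j (hii ▸ hij)
    omega
  · rw [Function.update_of_ne hji, Function.update_of_ne hii]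
    exact hm i j hij

lemma sum_addCell {d : ℕ} (lam : Fin d → ℕ) (a : Fin d) :
    ∑ i, PBT.addCell lam a i = (∑ i, lam i) + 1 := by
  unfold PBT.addCell
  rw [Finset.sum_update_of_mem (Finset.mem_univ a)]
  have h1 : ∑ x ∈ Finset.univ.erase a, lam x + lam a = ∑ i, lam i :=
    Finset.sum_erase_add _ _ (Finset.mem_univ a)
  rw [Finset.sdiff_singleton_eq_erase]
  omega

lemma sqrt3 (K B G M D : ℝ) (hK : 0 < K) (hB : 0 < B) (hG : 0 ≤ G) (hM : 0 ≤ M)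
    (hD : 0 < D) :
    Real.sqrt (K / B) * Real.sqrt (G * M / K) * Real.sqrt (M / D)
      = M * Real.sqrt (G / (B * D)) := by
  rw [← Real.sqrt_mul (by positivity), ← Real.sqrt_mul (by positivity)]
  rw [show K / B * (G * M / K) * (M / D) = M ^ 2 * (G / (B * D)) by
    field_simp]
  rw [Real.sqrt_mul (sq_nonneg M), Real.sqrt_sq hM]

lemma ptn_nonempty (d N : ℕ) (hd : 0 < d) :
    ∃ lam ∈ PBT.Ptn d N, ∀ i j : Fin d, i ≤ j → lam j ≤ lam i := by
  refine ⟨fun i => if i = ⟨0, hd⟩ then N else 0, ?_, ?_⟩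
  · rw [PBT.Ptn, Finset.mem_filter]
    refine ⟨?_, ?_, ?_⟩
    · rw [Fintype.mem_piFinset]
      intro i
      rw [Finset.mem_range]
      split_ifs <;> omega
    · intro i j hij
      by_cases hj : j = ⟨0, hd⟩
      · have hi : i = ⟨0, hd⟩ := by
          subst hj
          exact le_antisymm hij (Fin.mk_le_of_le_val (Nat.zero_le _))
        simp [hi, hj]
      · simp only [if_neg hj]
        exact Nat.zero_le _
    · simp [Finset.sum_ite_eq']
  · intro i j hij
    by_cases hj : j = ⟨0, hd⟩
    · have hi : i = ⟨0, hd⟩ := by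
        subst hj
        exact le_antisymm hij (Fin.mk_le_of_le_val (Nat.zero_le _))
      simp [hi, hj]
    · simp only [if_neg hj]
      exact Nat.zero_le _


/-- Overlap formula in two-step PBT: for `ν ⊢_d N−2` and `a ∈ AC_d(ν)`,
`⟨v|w_a⟩ = ∑_{b∈AC_d(ν∪a)} √(d_{ν∪a∪b}/(N d_{ν∪a})) √(c_{ν∪a∪b}) √(m_{ν∪a∪b}/m_ν)
 = d · m_{ν∪a} · √(d^N g(N)/(N d_{ν∪a} m_ν))`,
where `c_μ = d^N g(N) m_μ/d_μ` and `g(N) = 1/∑_{μ⊢_d N} m_μ²`. -/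
theorem stmt16 (d N : ℕ) (hd : 0 < d) (hN : 2 ≤ N)
    (ν : Fin d → ℕ) (hν : ν ∈ PBT.Ptn d (N - 2)) (a : Fin d) (ha : a ∈ PBT.AC d ν) :
    ∑ b ∈ PBT.AC d (PBT.addCell ν a),
      Real.sqrt ((PBT.syt (PBT.addCell (PBT.addCell ν a) b) : ℝ) /
          ((N : ℝ) * (PBT.syt (PBT.addCell ν a) : ℝ))) *
      Real.sqrt ((d : ℝ) ^ N *
          (1 / ∑ μ ∈ PBT.Ptn d N, ((PBT.weylDim d μ : ℚ) : ℝ) ^ 2) *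
          ((PBT.weylDim d (PBT.addCell (PBT.addCell ν a) b) : ℚ) : ℝ) /
          (PBT.syt (PBT.addCell (PBT.addCell ν a) b) : ℝ)) *
      Real.sqrt (((PBT.weylDim d (PBT.addCell (PBT.addCell ν a) b) : ℚ) : ℝ) /
          ((PBT.weylDim d ν : ℚ) : ℝ)) =
    (d : ℝ) * ((PBT.weylDim d (PBT.addCell ν a) : ℚ) : ℝ) *
      Real.sqrt ((d : ℝ) ^ N *
          (1 / ∑ μ ∈ PBT.Ptn d N, ((PBT.weylDim d μ : ℚ) : ℝ) ^ 2) /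
          ((N : ℝ) * (PBT.syt (PBT.addCell ν a) : ℝ) *
            ((PBT.weylDim d ν : ℚ) : ℝ))) := by
  classical
  have hmem := Finset.mem_filter.mp hν
  have hmono : ∀ i j : Fin d, i ≤ j → ν j ≤ ν i := hmem.2.1
  have hmono1 : ∀ i j : Fin d, i ≤ j → PBT.addCell ν a j ≤ PBT.addCell ν a i :=
    addCell_anti hmono ha
  set S : ℝ := ∑ μ ∈ PBT.Ptn d N, ((PBT.weylDim d μ : ℚ) : ℝ) ^ 2 with hS
  have hSpos : 0 < S := by
    obtain ⟨lam0, hlam0, hanti0⟩ := ptn_nonempty d N hd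
    refine Finset.sum_pos' (fun μ _ => sq_nonneg _) ⟨lam0, hlam0, ?_⟩
    have h0 : (0 : ℝ) < ((PBT.weylDim d lam0 : ℚ) : ℝ) := by
      exact_mod_cast weylDim_pos lam0 hanti0
    positivity
  have hG : (0 : ℝ) < (d : ℝ) ^ N * (1 / S) := by positivity
  have hDν : (0 : ℝ) < ((PBT.weylDim d ν : ℚ) : ℝ) := by
    exact_mod_cast weylDim_pos ν hmono
  have hDa : (0 : ℝ) < ((PBT.weylDim d (PBT.addCell ν a) : ℚ) : ℝ) := by
    exact_mod_cast weylDim_pos _ hmono1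
  have hNpos : 0 < N := by omega
  have hsytA : (0 : ℝ) < (PBT.syt (PBT.addCell ν a) : ℝ) := by
    exact_mod_cast syt_pos _ hmono1
  have hB : (0 : ℝ) < (N : ℝ) * (PBT.syt (PBT.addCell ν a) : ℝ) := by positivity
  have hterm : ∀ b ∈ PBT.AC d (PBT.addCell ν a),
      Real.sqrt ((PBT.syt (PBT.addCell (PBT.addCell ν a) b) : ℝ) /
          ((N : ℝ) * (PBT.syt (PBT.addCell ν a) : ℝ))) *
      Real.sqrt ((d : ℝ) ^ N * (1 / S) *
          ((PBT.weylDim d (PBT.addCell (PBT.addCell ν a) b) : ℚ) : ℝ) /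
          (PBT.syt (PBT.addCell (PBT.addCell ν a) b) : ℝ)) *
      Real.sqrt (((PBT.weylDim d (PBT.addCell (PBT.addCell ν a) b) : ℚ) : ℝ) /
          ((PBT.weylDim d ν : ℚ) : ℝ))
        = ((PBT.weylDim d (PBT.addCell (PBT.addCell ν a) b) : ℚ) : ℝ) *
          Real.sqrt ((d : ℝ) ^ N * (1 / S) /
            ((N : ℝ) * (PBT.syt (PBT.addCell ν a) : ℝ) *
              ((PBT.weylDim d ν : ℚ) : ℝ))) := by
    intro b hb
    have hmono2 := addCell_anti hmono1 hb
    have hM : (0 : ℝ) < ((PBT.weylDim d (PBT.addCell (PBT.addCell ν a) b) : ℚ) : ℝ) := by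
      exact_mod_cast weylDim_pos _ hmono2
    have hK : (0 : ℝ) < (PBT.syt (PBT.addCell (PBT.addCell ν a) b) : ℝ) := by
      exact_mod_cast syt_pos _ hmono2
    exact sqrt3 _ _ _ _ _ hK hB hG.le hM.le hDν
  rw [Finset.sum_congr rfl hterm, ← Finset.sum_mul]
  have hp : ∑ b ∈ PBT.AC d (PBT.addCell ν a),
      ((PBT.weylDim d (PBT.addCell (PBT.addCell ν a) b) : ℚ) : ℝ)
      = (d : ℝ) * ((PBT.weylDim d (PBT.addCell ν a) : ℚ) : ℝ) := by
    have := pieri (PBT.addCell ν a) hmono1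
    exact_mod_cast congrArg (fun q : ℚ => (q : ℝ)) this
  rw [hp, mul_assoc]
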